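/- Let (π, π̃) be an α-coupled policy pair, meaning there is a joint distribution over action pairs (a, ã) at each state whose marginals are π and π̃ and with P(a ≠ ã | s) ≤ α for all s. Let Ā(s) = E_{a∼π̃(·|s)}[A_π(s,a)] and ε = max_s |Ā(s)|. Then for every t ≥ 0, |E_{s_t∼π̃}[Ā(s_t)] − E_{s_t∼π}[Ā(s_t)]| ≤ 2ε(1 − (1−α)^t), where s_t∼π (resp. π̃) denotes the state distribution at time t when executing π (resp. π̃) from s₀∼ρ₀. -/

import Mathlib

open Finset

/-- State distribution at time `t` when executing policy `π`, starting from `ρ₀`. -/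
noncomputable def stateDist {S A : Type} [Fintype S] [Fintype A]
    (P : S → A → S → ℝ) (π : S → A → ℝ) (ρ₀ : S → ℝ) : ℕ → S → ℝ
  | 0 => ρ₀
  | (t+1) => fun s' => ∑ s, ∑ a, stateDist P π ρ₀ t s * π s a * P s a s'

/-- Unnormalized discounted state visitation frequency. -/
noncomputable def visit {S A : Type} [Fintype S] [Fintype A]
    (P : S → A → S → ℝ) (π : S → A → ℝ) (ρ₀ : S → ℝ) (γ : ℝ) (s : S) : ℝ :=
  ∑' t : ℕ, γ ^ t * stateDist P π ρ₀ t s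

/-! Let `d_t` be the ℓ¹ distance between the time-`t` state distributions of `πt` and `π`. Through
the coupling, the one-step kernels of the two policies are `2α`-close in ℓ¹ from every state.
Splitting the two distributions into their common part `min μ ν`, of mass `1 - d_t / 2`, and the
remainders gives `d_{t+1} ≤ 2α + (1 - α) d_t`, hence `d_t ≤ 2 (1 - (1 - α)^t)`; finally
`|E_μ f - E_ν f| ≤ ‖f‖_∞ d_t`. -/

section Stochastic

variable {ι κ : Type*} [Fintype ι] [Fintype κ]

theorem abs_sum_mul_sub_sum_mul_le {μ ν f : ι → ℝ} {ε : ℝ} (hf : ∀ i, |f i| ≤ ε) :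
    |∑ i, μ i * f i - ∑ i, ν i * f i| ≤ ε * ∑ i, |μ i - ν i| := by
  rw [← sum_sub_distrib, mul_sum]
  refine (abs_sum_le_sum_abs _ _).trans (sum_le_sum fun i _ => ?_)
  rw [← sub_mul, abs_mul, mul_comm]
  exact mul_le_mul_of_nonneg_right (hf i) (abs_nonneg _)

theorem sum_abs_smul_sub_smul_le {k l : κ → ℝ} (hk : ∀ j, 0 ≤ k j) (hl : ∀ j, 0 ≤ l j)
    (hk1 : ∑ j, k j = 1) (hl1 : ∑ j, l j = 1) {α : ℝ} (hkl : ∑ j, |k j - l j| ≤ 2 * α)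
    {a b : ℝ} (ha : 0 ≤ a) (hb : 0 ≤ b) :
    ∑ j, |a * k j - b * l j| ≤ α * (a + b) + (1 - α) * |a - b| := by
  wlog hab : a ≤ b generalizing a b k l
  · have hkl' : ∑ j, |l j - k j| ≤ 2 * α := by simpa only [abs_sub_comm] using hkl
    have := this hl hk hl1 hk1 hkl' hb ha (le_of_not_ge hab)
    simpa only [abs_sub_comm, add_comm b a] using this
  have hpoint : ∀ j, |a * k j - b * l j| ≤ a * |k j - l j| + (b - a) * l j := fun j => by
    calc |a * k j - b * l j| = |a * (k j - l j) - (b - a) * l j| := by ring_nf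
      _ ≤ |a * (k j - l j)| + |(b - a) * l j| := abs_sub _ _
      _ = a * |k j - l j| + (b - a) * l j := by
        rw [abs_mul, abs_mul, abs_of_nonneg ha, abs_of_nonneg (sub_nonneg.2 hab),
          abs_of_nonneg (hl j)]
  calc ∑ j, |a * k j - b * l j| ≤ ∑ j, (a * |k j - l j| + (b - a) * l j) :=
        sum_le_sum fun j _ => hpoint j
    _ = a * ∑ j, |k j - l j| + (b - a) := by
        rw [sum_add_distrib, ← mul_sum, ← mul_sum, hl1, mul_one]
    _ ≤ a * (2 * α) + (b - a) := by gcongr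
    _ = α * (a + b) + (1 - α) * |a - b| := by
        rw [abs_sub_comm, abs_of_nonneg (sub_nonneg.2 hab)]; ring

theorem sum_abs_vecMul_sub_vecMul_le {μ ν : ι → ℝ} (hμ : ∀ i, 0 ≤ μ i) (hν : ∀ i, 0 ≤ ν i)
    (hμ1 : ∑ i, μ i = 1) (hν1 : ∑ i, ν i = 1) {K L : ι → κ → ℝ}
    (hK : ∀ i j, 0 ≤ K i j) (hL : ∀ i j, 0 ≤ L i j)
    (hK1 : ∀ i, ∑ j, K i j = 1) (hL1 : ∀ i, ∑ j, L i j = 1) {α : ℝ}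
    (hKL : ∀ i, ∑ j, |K i j - L i j| ≤ 2 * α) :
    ∑ j, |∑ i, μ i * K i j - ∑ i, ν i * L i j| ≤ 2 * α + (1 - α) * ∑ i, |μ i - ν i| :=
  calc ∑ j, |∑ i, μ i * K i j - ∑ i, ν i * L i j|
      ≤ ∑ j, ∑ i, |μ i * K i j - ν i * L i j| :=
        sum_le_sum fun j _ => by rw [← sum_sub_distrib]; exact abs_sum_le_sum_abs _ _
    _ = ∑ i, ∑ j, |μ i * K i j - ν i * L i j| := sum_comm
    _ ≤ ∑ i, (α * (μ i + ν i) + (1 - α) * |μ i - ν i|) := sum_le_sum fun i _ =>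
        sum_abs_smul_sub_smul_le (hK i) (hL i) (hK1 i) (hL1 i) (hKL i) (hμ i) (hν i)
    _ = 2 * α + (1 - α) * ∑ i, |μ i - ν i| := by
        rw [sum_add_distrib, ← mul_sum, ← mul_sum, sum_add_distrib, hμ1, hν1]; ring

theorem sum_abs_mix_sub_mix_le_of_coupling [DecidableEq ι] {p q : ι → ℝ} {c : ι → ι → ℝ}
    (hc : ∀ a b, 0 ≤ c a b) (hcp : ∀ a, ∑ b, c a b = p a) (hcq : ∀ b, ∑ a, c a b = q b)
    {f : ι → κ → ℝ} (hf : ∀ a j, 0 ≤ f a j) (hf1 : ∀ a, ∑ j, f a j = 1) :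
    ∑ j, |∑ b, q b * f b j - ∑ a, p a * f a j|
      ≤ 2 * ∑ a, ∑ b, (if a ≠ b then c a b else 0) := by
  have hmix : ∀ j, ∑ b, q b * f b j - ∑ a, p a * f a j = ∑ a, ∑ b, c a b * (f b j - f a j) :=
    fun j => by
      simp only [← hcq, ← hcp, sum_mul, mul_sub, sum_sub_distrib]
      rw [sum_comm]
  have hterm : ∀ a b j,
      |c a b * (f b j - f a j)| ≤ if a ≠ b then c a b * (f b j + f a j) else 0 := by
    intro a b j
    by_cases hab : a = b
    · simp [hab]
    · rw [if_pos hab, abs_mul, abs_of_nonneg (hc a b)]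
      have hdiff : |f b j - f a j| ≤ f b j + f a j :=
        abs_sub_le_iff.2 ⟨by linarith [hf a j], by linarith [hf b j]⟩
      exact mul_le_mul_of_nonneg_left hdiff (hc a b)
  calc ∑ j, |∑ b, q b * f b j - ∑ a, p a * f a j|
      ≤ ∑ j, ∑ a, ∑ b, (if a ≠ b then c a b * (f b j + f a j) else 0) := by
        refine sum_le_sum fun j _ => ?_
        rw [hmix]
        refine (abs_sum_le_sum_abs _ _).trans (sum_le_sum fun a _ => ?_)
        exact (abs_sum_le_sum_abs _ _).trans (sum_le_sum fun b _ => hterm a b j)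
    _ = ∑ a, ∑ b, 2 * (if a ≠ b then c a b else 0) := by
        rw [sum_comm]
        refine sum_congr rfl fun a _ => ?_
        rw [sum_comm]
        refine sum_congr rfl fun b _ => ?_
        split_ifs
        · rw [← mul_sum, sum_add_distrib, hf1, hf1]; ring
        · simp
    _ = 2 * ∑ a, ∑ b, (if a ≠ b then c a b else 0) := by simp only [mul_sum]

end Stochastic

section MDP

variable {S A : Type} [Fintype A] {P : S → A → S → ℝ} {π : S → A → ℝ} {ρ₀ : S → ℝ}

variable (P π) in
def policyKernel (s s' : S) : ℝ := ∑ a, π s a * P s a s'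

theorem stateDist_succ [Fintype S] (t : ℕ) (s' : S) :
    stateDist P π ρ₀ (t + 1) s' = ∑ s, stateDist P π ρ₀ t s * policyKernel P π s s' := by
  simp only [stateDist, policyKernel, mul_sum, mul_assoc]

theorem policyKernel_nonneg (hP : ∀ s a s', 0 ≤ P s a s') (hπ : ∀ s a, 0 ≤ π s a) (s s' : S) :
    0 ≤ policyKernel P π s s' :=
  sum_nonneg fun a _ => mul_nonneg (hπ s a) (hP s a s')

theorem sum_policyKernel [Fintype S] (hP1 : ∀ s a, ∑ s', P s a s' = 1)
    (hπ1 : ∀ s, ∑ a, π s a = 1) (s : S) :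
    ∑ s', policyKernel P π s s' = 1 := by
  simp only [policyKernel]
  rw [sum_comm]
  simp only [← mul_sum, hP1, mul_one, hπ1]

theorem stateDist_nonneg [Fintype S] (hP : ∀ s a s', 0 ≤ P s a s') (hπ : ∀ s a, 0 ≤ π s a)
    (hρ : ∀ s, 0 ≤ ρ₀ s) (t : ℕ) (s : S) : 0 ≤ stateDist P π ρ₀ t s := by
  induction t generalizing s with
  | zero => exact hρ s
  | succ t ih =>
    rw [stateDist_succ]
    exact sum_nonneg fun s₀ _ => mul_nonneg (ih s₀) (policyKernel_nonneg hP hπ s₀ s)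

theorem sum_stateDist [Fintype S] (hP1 : ∀ s a, ∑ s', P s a s' = 1) (hπ1 : ∀ s, ∑ a, π s a = 1)
    (hρ1 : ∑ s, ρ₀ s = 1) (t : ℕ) : ∑ s, stateDist P π ρ₀ t s = 1 := by
  induction t with
  | zero => exact hρ1
  | succ t ih =>
    simp only [stateDist_succ]
    rw [sum_comm]
    simp only [← mul_sum, sum_policyKernel hP1 hπ1, mul_one, ih]

theorem sum_abs_policyKernel_sub_le [Fintype S] [DecidableEq A] {πt : S → A → ℝ}
    {c : S → A → A → ℝ} {α : ℝ} (hP : ∀ s a s', 0 ≤ P s a s') (hP1 : ∀ s a, ∑ s', P s a s' = 1)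
    (hc : ∀ s a b, 0 ≤ c s a b) (hc1 : ∀ s a, ∑ b, c s a b = π s a)
    (hc2 : ∀ s b, ∑ a, c s a b = πt s b)
    (hcdis : ∀ s, ∑ a, ∑ b, (if a ≠ b then c s a b else 0) ≤ α) (s : S) :
    ∑ s', |policyKernel P πt s s' - policyKernel P π s s'| ≤ 2 * α :=
  (sum_abs_mix_sub_mix_le_of_coupling (hc s) (hc1 s) (hc2 s) (hP s) (hP1 s)).trans
    (by linarith [hcdis s])

theorem sum_abs_stateDist_sub_le [Fintype S] [DecidableEq A] {πt : S → A → ℝ}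
    {c : S → A → A → ℝ} {α : ℝ} (hα1 : α ≤ 1)
    (hP : ∀ s a s', 0 ≤ P s a s') (hP1 : ∀ s a, ∑ s', P s a s' = 1)
    (hρ : ∀ s, 0 ≤ ρ₀ s) (hρ1 : ∑ s, ρ₀ s = 1)
    (hπ : ∀ s a, 0 ≤ π s a) (hπ1 : ∀ s, ∑ a, π s a = 1)
    (hπt : ∀ s a, 0 ≤ πt s a) (hπt1 : ∀ s, ∑ a, πt s a = 1)
    (hc : ∀ s a b, 0 ≤ c s a b) (hc1 : ∀ s a, ∑ b, c s a b = π s a)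
    (hc2 : ∀ s b, ∑ a, c s a b = πt s b)
    (hcdis : ∀ s, ∑ a, ∑ b, (if a ≠ b then c s a b else 0) ≤ α) (t : ℕ) :
    ∑ s, |stateDist P πt ρ₀ t s - stateDist P π ρ₀ t s| ≤ 2 * (1 - (1 - α) ^ t) := by
  induction t with
  | zero => simp [stateDist]
  | succ t ih =>
    simp only [stateDist_succ]
    calc _ ≤ 2 * α + (1 - α) * ∑ s, |stateDist P πt ρ₀ t s - stateDist P π ρ₀ t s| :=
          sum_abs_vecMul_sub_vecMul_le (stateDist_nonneg hP hπt hρ t)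
            (stateDist_nonneg hP hπ hρ t) (sum_stateDist hP1 hπt1 hρ1 t)
            (sum_stateDist hP1 hπ1 hρ1 t) (policyKernel_nonneg hP hπt)
            (policyKernel_nonneg hP hπ) (sum_policyKernel hP1 hπt1) (sum_policyKernel hP1 hπ1)
            (sum_abs_policyKernel_sub_le hP hP1 hc hc1 hc2 hcdis)
      _ ≤ 2 * α + (1 - α) * (2 * (1 - (1 - α) ^ t)) := by gcongr
      _ = 2 * (1 - (1 - α) ^ (t + 1)) := by ring

end MDP

theorem stmt_4_general {S A : Type} [Fintype S] [Fintype A] [DecidableEq A]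
    (P : S → A → S → ℝ) (ρ₀ : S → ℝ) (α : ℝ)
    (π πt : S → A → ℝ) (c : S → A → A → ℝ)
    (hα1 : α ≤ 1)
    (hPpos : ∀ s a s', 0 ≤ P s a s') (hPsum : ∀ s a, ∑ s', P s a s' = 1)
    (hρpos : ∀ s, 0 ≤ ρ₀ s) (hρsum : ∑ s, ρ₀ s = 1)
    (hπpos : ∀ s a, 0 ≤ π s a) (hπsum : ∀ s, ∑ a, π s a = 1)
    (hπtpos : ∀ s a, 0 ≤ πt s a) (hπtsum : ∀ s, ∑ a, πt s a = 1)
    -- (π, πt) is an α-coupled policy pair, with joint distribution c s over (a, ã):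
    (hcpos : ∀ s a at_, 0 ≤ c s a at_)
    (hc1 : ∀ s a, ∑ at_, c s a at_ = π s a)
    (hc2 : ∀ s at_, ∑ a, c s a at_ = πt s at_)
    (hcdis : ∀ s, ∑ a, ∑ at_, (if a ≠ at_ then c s a at_ else 0) ≤ α)
    (Abar : S → ℝ)
    (ε : ℝ) (hε : IsGreatest (Set.range fun s => |Abar s|) ε) :
    ∀ t : ℕ,
      |(∑ s, stateDist P πt ρ₀ t s * Abar s) - ∑ s, stateDist P π ρ₀ t s * Abar s|
        ≤ 2 * ε * (1 - (1 - α) ^ t) := by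
  intro t
  have hbound : ∀ s, |Abar s| ≤ ε := fun s => hε.2 ⟨s, rfl⟩
  obtain ⟨s₀, hs₀⟩ := hε.1
  have hε0 : 0 ≤ ε := hs₀ ▸ abs_nonneg _
  calc _ ≤ ε * ∑ s, |stateDist P πt ρ₀ t s - stateDist P π ρ₀ t s| :=
        abs_sum_mul_sub_sum_mul_le hbound
    _ ≤ ε * (2 * (1 - (1 - α) ^ t)) := mul_le_mul_of_nonneg_left
        (sum_abs_stateDist_sub_le hα1 hPpos hPsum hρpos hρsum hπpos hπsum hπtpos hπtsum
          hcpos hc1 hc2 hcdis t) hε0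
    _ = 2 * ε * (1 - (1 - α) ^ t) := by ring

/-- Coupling lemma: per-timestep bound on state-distribution mismatch of expected
advantage for an α-coupled policy pair. -/
theorem stmt_4 {S A : Type} [Fintype S] [Fintype A] [Nonempty S] [DecidableEq A]
    (P : S → A → S → ℝ) (r : S → ℝ) (ρ₀ : S → ℝ) (γ : ℝ) (α : ℝ)
    (π πt : S → A → ℝ) (c : S → A → A → ℝ) (V : S → ℝ) (Q Aπ : S → A → ℝ)
    (hγ0 : 0 < γ) (hγ1 : γ < 1) (hα0 : 0 ≤ α) (hα1 : α ≤ 1)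
    (hPpos : ∀ s a s', 0 ≤ P s a s') (hPsum : ∀ s a, ∑ s', P s a s' = 1)
    (hρpos : ∀ s, 0 ≤ ρ₀ s) (hρsum : ∑ s, ρ₀ s = 1)
    (hπpos : ∀ s a, 0 ≤ π s a) (hπsum : ∀ s, ∑ a, π s a = 1)
    (hπtpos : ∀ s a, 0 ≤ πt s a) (hπtsum : ∀ s, ∑ a, πt s a = 1)
    -- (π, πt) is an α-coupled policy pair, with joint distribution c s over (a, ã):
    (hcpos : ∀ s a at_, 0 ≤ c s a at_)
    (hc1 : ∀ s a, ∑ at_, c s a at_ = π s a)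
    (hc2 : ∀ s at_, ∑ a, c s a at_ = πt s at_)
    (hcdis : ∀ s, ∑ a, ∑ at_, (if a ≠ at_ then c s a at_ else 0) ≤ α)
    (hV : ∀ s, V s = ∑ a, π s a * (r s + γ * ∑ s', P s a s' * V s'))
    (hQ : ∀ s a, Q s a = r s + γ * ∑ s', P s a s' * V s')
    (hA : ∀ s a, Aπ s a = Q s a - V s)
    (Abar : S → ℝ) (hAbar : ∀ s, Abar s = ∑ a, πt s a * Aπ s a)
    (ε : ℝ) (hε : IsGreatest (Set.range fun s => |Abar s|) ε) :
    ∀ t : ℕ,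
      |(∑ s, stateDist P πt ρ₀ t s * Abar s) - ∑ s, stateDist P π ρ₀ t s * Abar s|
        ≤ 2 * ε * (1 - (1 - α) ^ t) :=
  stmt_4_general P ρ₀ α π πt c hα1 hPpos hPsum hρpos hρsum hπpos hπsum hπtpos hπtsum hcpos hc1 hc2
    hcdis Abar ε hε
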